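/- Let T : SL^∞ → SL^∞ be a bounded linear operator and g ∈ H^1. For sign sequences ε with |ε_I| = 1, let r_m^{(ε)} = Σ_{I∈𝒟_m} ε_I h_I. Then for any finite M, (Σ_{m=1}^M |⟨T r_m^{(ε)}, g⟩|²)^{1/2} ≤ ‖T‖ · ‖g‖_{H^1}; hence sup_{‖c‖_∞ ≤ 1} |⟨T r_m^{(c)}, g⟩| → 0 as m → ∞. -/

import Mathlib

/- Setup: dyadic intervals on [0,1), L^∞-normalized Haar coefficients, the SL^∞
square-function norm, the dyadic H^1 norm, and the L² pairing, all expressed on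
the space `Dy → ℝ` of Haar coefficient sequences. -/

open MeasureTheory Filter ENNReal

noncomputable section

/-- Dyadic intervals, encoded as pairs (n, k) with k < 2^n. -/
abbrev Dy := {p : ℕ × ℕ // p.2 < 2 ^ p.1}

/-- The level (frequency) of a dyadic interval. -/
def dlev (I : Dy) : ℕ := I.val.1

/-- The dyadic interval [k/2^n, (k+1)/2^n) as a subset of ℝ. -/
def dint (I : Dy) : Set ℝ :=
  Set.Ico ((I.val.2 : ℝ) / 2 ^ I.val.1) ((I.val.2 + 1 : ℝ) / 2 ^ I.val.1)

/-- The length |I| = 2^{-n} of a dyadic interval. -/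
def dlen (I : Dy) : ℝ := ((2 : ℝ) ^ I.val.1)⁻¹

/-- The square function (Σ_I a_I² 1_I(x)) of the Haar series with coefficients `a`. -/
def sqFn (a : Dy → ℝ) (x : ℝ) : ℝ≥0∞ :=
  ∑' I : Dy, Set.indicator (dint I) (fun _ => ENNReal.ofReal ((a I) ^ 2)) x

/-- The SL^∞ norm: ‖Σ a_I h_I‖ = sup_x (Σ a_I² 1_I(x))^{1/2}. -/
def slNorm (a : Dy → ℝ) : ℝ≥0∞ := ⨆ x : ℝ, sqFn a x ^ (1 / 2 : ℝ)

/-- The dyadic H^1 norm: ∫₀¹ (Σ a_I² 1_I(x))^{1/2} dx. -/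
def h1Norm (a : Dy → ℝ) : ℝ≥0∞ := ∫⁻ x in Set.Ico (0 : ℝ) 1, sqFn a x ^ (1 / 2 : ℝ)

/-- The L² pairing ⟨f, g⟩ = Σ_I a_I b_I |I| of two Haar series. -/
def pairing (a b : Dy → ℝ) : ℝ := ∑' I : Dy, a I * b I * dlen I


/-- The Rademacher-type function r_m^{(c)} = Σ_{I ∈ 𝒟_m} c_I h_I (its Haar coefficients). -/
def radem (c : Dy → ℝ) (m : ℕ) : Dy → ℝ := fun I => if dlev I = m then c I else 0

/-!
Pairing against `H¹` is controlled by the `SL^∞` norm: pointwise Cauchy–Schwarz in the Haar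
coefficients followed by integration gives `|⟨f, g⟩| ≤ ‖f‖_{SL^∞} ‖g‖_{H¹}`. Since every point lies
in exactly one dyadic interval of each level, `‖∑_m ω_m r_m^{(c_m)}‖_{SL^∞} ≤ (∑_m ω_m²)^{1/2}`
whenever `|c_m| ≤ 1`. Testing `T` against `f = ∑_m p_m r_m^{(c_m)}` with `p_m = ⟨T r_m^{(c_m)}, g⟩`
gives `∑_m p_m² = ⟨T f, g⟩ ≤ C (∑_m p_m²)^{1/2} ‖g‖_{H¹}`, which is the square-sum bound. As the
`c_m` may be chosen freely for each `m`, the squares of the suprema over `c` have bounded partial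
sums as well, so the suprema tend to zero.
-/

open Topology

lemma dlen_pos (I : Dy) : 0 < dlen I := by
  unfold dlen; positivity

lemma measurableSet_dint (I : Dy) : MeasurableSet (dint I) := measurableSet_Ico

lemma dint_subset_Ico (I : Dy) : dint I ⊆ Set.Ico (0 : ℝ) 1 := by
  have hk : (I.val.2 : ℝ) + 1 ≤ 2 ^ I.val.1 := by exact_mod_cast I.property
  refine Set.Ico_subset_Ico (by positivity) ?_
  rwa [div_le_one (by positivity)]

lemma volume_dint (I : Dy) : volume (dint I) = ENNReal.ofReal (dlen I) := by
  rw [dint, Real.volume_Ico, dlen]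
  congr 1
  field_simp
  ring

lemma eq_of_mem_dint_of_dlev_eq {I J : Dy} (h : dlev I = dlev J) {x : ℝ}
    (hI : x ∈ dint I) (hJ : x ∈ dint J) : I = J := by
  obtain ⟨⟨n, k⟩, hk⟩ := I
  obtain ⟨⟨n', k'⟩, hk'⟩ := J
  obtain rfl : n = n' := h
  simp only [dint, Set.mem_Ico, div_le_iff₀ (by positivity : (0 : ℝ) < 2 ^ n),
    lt_div_iff₀ (by positivity : (0 : ℝ) < 2 ^ n)] at hI hJ
  have h1 : k < k' + 1 := by exact_mod_cast hI.1.trans_lt hJ.2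
  have h2 : k' < k + 1 := by exact_mod_cast hJ.1.trans_lt hI.2
  obtain rfl : k = k' := by omega
  rfl

lemma measurable_sqFn (a : Dy → ℝ) : Measurable (sqFn a) :=
  Measurable.tsum fun I => measurable_const.indicator (measurableSet_dint I)

section PairingEstimate

lemma ofReal_sq_rpow_half (a : ℝ) : ENNReal.ofReal (a ^ 2) ^ (1 / 2 : ℝ) = ENNReal.ofReal |a| := by
  rw [ENNReal.ofReal_rpow_of_nonneg (sq_nonneg a) (by norm_num), ← sq_abs,
    ← Real.rpow_natCast, ← Real.rpow_mul (abs_nonneg a)]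
  norm_num

lemma tsum_indicator_abs_mul_le (a b : Dy → ℝ) (x : ℝ) :
    ∑' I, (dint I).indicator (fun _ => ENNReal.ofReal (|a I| * |b I|)) x
      ≤ sqFn a x ^ (1 / 2 : ℝ) * sqFn b x ^ (1 / 2 : ℝ) := by
  set u : Dy → ℝ≥0∞ := fun I => (dint I).indicator (fun _ => ENNReal.ofReal (a I ^ 2)) x
  set v : Dy → ℝ≥0∞ := fun I => (dint I).indicator (fun _ => ENNReal.ofReal (b I ^ 2)) x
  have hterm : ∀ I, (dint I).indicator (fun _ => ENNReal.ofReal (|a I| * |b I|)) x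
      = u I ^ (1 / 2 : ℝ) * v I ^ (1 / 2 : ℝ) := by
    intro I
    by_cases hx : x ∈ dint I
    · simp only [u, v, Set.indicator_of_mem hx, ofReal_sq_rpow_half,
        ← ENNReal.ofReal_mul (abs_nonneg _)]
    · simp only [u, v, Set.indicator_of_notMem hx,
        ENNReal.zero_rpow_of_pos (by norm_num : (0 : ℝ) < 1 / 2), mul_zero]
  have hsq : ∀ w : ℝ≥0∞, (w ^ (1 / 2 : ℝ)) ^ (2 : ℝ) = w := fun w => by
    rw [← ENNReal.rpow_mul]; norm_num
  have hCS := ENNReal.lintegral_mul_le_Lp_mul_Lq (Measure.count : Measure Dy)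
    Real.HolderConjugate.two_two
    (measurable_of_countable fun I => u I ^ (1 / 2 : ℝ)).aemeasurable
    (measurable_of_countable fun I => v I ^ (1 / 2 : ℝ)).aemeasurable
  simp only [Pi.mul_apply, lintegral_count, hsq] at hCS
  rw [tsum_congr hterm]
  exact hCS

lemma tsum_ofReal_abs_mul_dlen_le (a b : Dy → ℝ) :
    ∑' I, ENNReal.ofReal |a I * b I * dlen I| ≤ slNorm a * h1Norm b := by
  have hterm : ∀ I, ENNReal.ofReal |a I * b I * dlen I| = ∫⁻ x in Set.Ico (0 : ℝ) 1,
      (dint I).indicator (fun _ => ENNReal.ofReal (|a I| * |b I|)) x := fun I => by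
    rw [lintegral_indicator (measurableSet_dint I), setLIntegral_const,
      Measure.restrict_apply (measurableSet_dint I),
      Set.inter_eq_self_of_subset_left (dint_subset_Ico I), volume_dint,
      ← ENNReal.ofReal_mul (by positivity), abs_mul, abs_mul, abs_of_pos (dlen_pos I)]
  calc ∑' I, ENNReal.ofReal |a I * b I * dlen I|
      = ∫⁻ x in Set.Ico (0 : ℝ) 1,
          ∑' I, (dint I).indicator (fun _ => ENNReal.ofReal (|a I| * |b I|)) x := by
        rw [tsum_congr hterm, lintegral_tsum fun I =>
          (measurable_const.indicator (measurableSet_dint I)).aemeasurable]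
    _ ≤ ∫⁻ x in Set.Ico (0 : ℝ) 1, slNorm a * sqFn b x ^ (1 / 2 : ℝ) := by
        refine lintegral_mono fun x => (tsum_indicator_abs_mul_le a b x).trans ?_
        gcongr
        exact le_iSup (fun y => sqFn a y ^ (1 / 2 : ℝ)) x
    _ = slNorm a * h1Norm b := lintegral_const_mul _ ((measurable_sqFn b).pow_const _)

variable {a b : Dy → ℝ}

lemma summable_abs_pairing (ha : slNorm a ≠ ⊤) (hb : h1Norm b ≠ ⊤) :
    Summable fun I => |a I * b I * dlen I| := by
  simpa only [ENNReal.toReal_ofReal (abs_nonneg _)] using ENNReal.summable_toReal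
    (ne_top_of_le_ne_top (ENNReal.mul_ne_top ha hb) (tsum_ofReal_abs_mul_dlen_le a b))

lemma summable_pairing (ha : slNorm a ≠ ⊤) (hb : h1Norm b ≠ ⊤) :
    Summable fun I => a I * b I * dlen I :=
  (summable_abs_pairing ha hb).of_abs

lemma abs_pairing_le (ha : slNorm a ≠ ⊤) (hb : h1Norm b ≠ ⊤) :
    |pairing a b| ≤ (slNorm a * h1Norm b).toReal := by
  have hs := summable_abs_pairing ha hb
  calc |pairing a b| ≤ ∑' I, |a I * b I * dlen I| := by
        unfold pairing
        simpa only [Real.norm_eq_abs] using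
          norm_tsum_le_tsum_norm (f := fun I => a I * b I * dlen I)
            (by simpa only [Real.norm_eq_abs] using hs)
    _ = (∑' I, ENNReal.ofReal |a I * b I * dlen I|).toReal := by
        rw [← ENNReal.ofReal_tsum_of_nonneg (fun _ => abs_nonneg _) hs,
          ENNReal.toReal_ofReal (tsum_nonneg fun _ => abs_nonneg _)]
    _ ≤ (slNorm a * h1Norm b).toReal :=
        ENNReal.toReal_mono (ENNReal.mul_ne_top ha hb) (tsum_ofReal_abs_mul_dlen_le a b)

lemma pairing_sum_smul_left {α : Type*} (F : Finset α) (ω : α → ℝ) (f : α → Dy → ℝ)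
    (hf : ∀ m ∈ F, Summable fun I => f m I * b I * dlen I) :
    pairing (∑ m ∈ F, ω m • f m) b = ∑ m ∈ F, ω m * pairing (f m) b := by
  calc pairing (∑ m ∈ F, ω m • f m) b = ∑' I, ∑ m ∈ F, ω m * (f m I * b I * dlen I) := by
        simp only [pairing, Finset.sum_apply, Pi.smul_apply, smul_eq_mul, Finset.sum_mul, mul_assoc]
    _ = ∑ m ∈ F, ∑' I, ω m * (f m I * b I * dlen I) :=
        Summable.tsum_finsetSum fun m hm => (hf m hm).mul_left (ω m)
    _ = ∑ m ∈ F, ω m * pairing (f m) b := by simp only [tsum_mul_left, pairing]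

end PairingEstimate

lemma tsum_level_indicator_le (m : ℕ) (x : ℝ) (t : ℝ≥0∞) :
    ∑' I : dlev ⁻¹' {m}, (dint I).indicator (fun _ => t) x ≤ t := by
  by_cases h : ∃ I : dlev ⁻¹' {m}, x ∈ dint I
  · obtain ⟨I₀, hx₀⟩ := h
    rw [tsum_eq_single I₀ fun J hJ => Set.indicator_of_notMem (fun hx =>
      hJ (Subtype.ext (eq_of_mem_dint_of_dlev_eq (J.2.trans I₀.2.symm) hx hx₀))) _]
    exact Set.indicator_apply_le' (fun _ => le_rfl) fun _ => bot_le
  · push Not at h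
    simp [Set.indicator_of_notMem (h _)]

/-- The square function at `x` sees at most one interval per level. -/
lemma sqFn_le_tsum_of_sq_le {f : Dy → ℝ} {w : ℕ → ℝ≥0∞}
    (hf : ∀ I, ENNReal.ofReal (f I ^ 2) ≤ w (dlev I)) (x : ℝ) : sqFn f x ≤ ∑' m, w m :=
  calc sqFn f x
      = ∑' m, ∑' I : dlev ⁻¹' {m}, (dint I).indicator (fun _ => ENNReal.ofReal (f I ^ 2)) x :=
        (ENNReal.tsum_fiberwise _ dlev).symm
    _ ≤ ∑' m, ∑' I : dlev ⁻¹' {m}, (dint I).indicator (fun _ => w m) x := by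
        gcongr with m I
        obtain ⟨I, rfl : dlev I = m⟩ := I
        exact hf I
    _ ≤ ∑' m, w m := ENNReal.tsum_le_tsum fun m => tsum_level_indicator_le m x (w m)

lemma slNorm_le_of_sq_le {f : Dy → ℝ} {w : ℕ → ℝ≥0∞}
    (hf : ∀ I, ENNReal.ofReal (f I ^ 2) ≤ w (dlev I)) : slNorm f ≤ (∑' m, w m) ^ (1 / 2 : ℝ) :=
  iSup_le fun x => ENNReal.rpow_le_rpow (sqFn_le_tsum_of_sq_le hf x) (by norm_num)

lemma sum_smul_radem_apply (F : Finset ℕ) (ω : ℕ → ℝ) (c : ℕ → Dy → ℝ) (I : Dy) :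
    (∑ m ∈ F, ω m • radem (c m) m) I = if dlev I ∈ F then ω (dlev I) * c (dlev I) I else 0 := by
  simp only [Finset.sum_apply, Pi.smul_apply, smul_eq_mul, radem, mul_ite, mul_zero]
  exact Finset.sum_ite_eq F (dlev I) fun m => ω m * c m I

lemma slNorm_sum_smul_radem_le (F : Finset ℕ) (ω : ℕ → ℝ) {c : ℕ → Dy → ℝ}
    (hc : ∀ m I, |c m I| ≤ 1) :
    slNorm (∑ m ∈ F, ω m • radem (c m) m) ≤ ENNReal.ofReal √(∑ m ∈ F, ω m ^ 2) := by
  classical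
  refine (slNorm_le_of_sq_le (w := fun m => if m ∈ F then ENNReal.ofReal (ω m ^ 2) else 0)
    fun I => ?_).trans_eq ?_
  · rw [sum_smul_radem_apply]
    split_ifs
    · refine ENNReal.ofReal_le_ofReal ?_
      rw [mul_pow, ← sq_abs (c _ I)]
      exact mul_le_of_le_one_right (sq_nonneg _)
        (pow_le_one₀ (abs_nonneg _) (hc _ I))
    · simp
  · rw [tsum_eq_sum (s := F) fun m hm => if_neg hm, Finset.sum_ite_of_true fun _ h => h,
      ← ENNReal.ofReal_sum_of_nonneg fun _ _ => sq_nonneg _,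
      ENNReal.ofReal_rpow_of_nonneg (Finset.sum_nonneg fun _ _ => sq_nonneg _) (by norm_num),
      Real.sqrt_eq_rpow]

lemma slNorm_radem_le {c : Dy → ℝ} (hc : ∀ I, |c I| ≤ 1) (m : ℕ) : slNorm (radem c m) ≤ 1 := by
  simpa using slNorm_sum_smul_radem_le {m} (fun _ => 1) fun _ => hc

lemma sqrt_le_of_le_mul_sqrt {S A : ℝ} (hA : 0 ≤ A) (h : S ≤ A * √S) : √S ≤ A := by
  rcases le_or_gt S 0 with hS | hS
  · rwa [Real.sqrt_eq_zero'.2 hS]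
  · refine le_of_mul_le_mul_right ?_ (Real.sqrt_pos.2 hS)
    rwa [Real.mul_self_sqrt hS.le]

lemma sqrt_sum_sq_pairing_radem_le (T : (Dy → ℝ) →ₗ[ℝ] (Dy → ℝ)) (C : NNReal)
    (hT : ∀ f : Dy → ℝ, slNorm (T f) ≤ (C : ℝ≥0∞) * slNorm f)
    {g : Dy → ℝ} (hg : h1Norm g ≠ ⊤) {c : ℕ → Dy → ℝ} (hc : ∀ m I, |c m I| ≤ 1)
    (F : Finset ℕ) :
    √(∑ m ∈ F, pairing (T (radem (c m) m)) g ^ 2) ≤ C * (h1Norm g).toReal := by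
  set p : ℕ → ℝ := fun m => pairing (T (radem (c m) m)) g
  set S := ∑ m ∈ F, p m ^ 2
  set f := ∑ m ∈ F, p m • radem (c m) m
  have hTf : slNorm (T f) ≤ C * ENNReal.ofReal √S :=
    (hT f).trans (by gcongr; exact slNorm_sum_smul_radem_le F p hc)
  have hTr : ∀ m, slNorm (T (radem (c m) m)) ≠ ⊤ := fun m =>
    ne_top_of_le_ne_top (mul_ne_top coe_ne_top one_ne_top)
      ((hT _).trans (by gcongr; exact slNorm_radem_le (hc m) m))
  have hpair : pairing (T f) g = S := by
    simp only [f, map_sum, map_smul]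
    rw [pairing_sum_smul_left F p _ fun m _ => summable_pairing (hTr m) hg]
    exact Finset.sum_congr rfl fun m _ => (sq (p m)).symm
  refine sqrt_le_of_le_mul_sqrt (by positivity) ?_
  calc S ≤ |pairing (T f) g| := hpair ▸ le_abs_self _
    _ ≤ (slNorm (T f) * h1Norm g).toReal :=
        abs_pairing_le (ne_top_of_le_ne_top (mul_ne_top coe_ne_top ofReal_ne_top) hTf) hg
    _ ≤ (C * ENNReal.ofReal √S * h1Norm g).toReal :=
        toReal_mono (mul_ne_top (mul_ne_top coe_ne_top ofReal_ne_top) hg) (by gcongr)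
    _ = C * (h1Norm g).toReal * √S := by
        simp only [ENNReal.toReal_mul, ENNReal.coe_toReal,
          ENNReal.toReal_ofReal (Real.sqrt_nonneg _)]
        ring

/-- Near-maximisers of each `x m` can be chosen independently in `m`. -/
lemma sum_sq_iSup_abs_le {α ι : Type*} [Nonempty ι] {x : α → ι → ℝ} {K : ℝ}
    (h : ∀ (c : α → ι) (F : Finset α), ∑ m ∈ F, x m (c m) ^ 2 ≤ K) (F : Finset α) :
    ∑ m ∈ F, (⨆ i, |x m i|) ^ 2 ≤ K := by
  have hbdd : ∀ m, BddAbove (Set.range fun i => |x m i|) := fun m =>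
    ⟨√K, Set.forall_mem_range.2 fun i => Real.abs_le_sqrt <| by
      simpa using h (fun _ => i) {m}⟩
  have hseq : ∀ m, ∃ u : ℕ → ι, Tendsto (fun n => |x m (u n)|) atTop (𝓝 (⨆ i, |x m i|)) := by
    intro m
    obtain ⟨v, -, hv, hvmem⟩ := exists_seq_tendsto_sSup (Set.range_nonempty _) (hbdd m)
    choose u hu using hvmem
    exact ⟨u, by rwa [show (fun n => |x m (u n)|) = v from funext hu]⟩
  choose u hu using hseq
  refine le_of_tendsto' (tendsto_finsetSum F fun m _ => (hu m).pow 2) fun n => ?_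
  simpa only [sq_abs] using h (fun m => u m n) F

lemma tendsto_zero_of_sum_sq_le {a : ℕ → ℝ} {K : ℝ} (ha : ∀ m, 0 ≤ a m)
    (h : ∀ F : Finset ℕ, ∑ m ∈ F, a m ^ 2 ≤ K) : Tendsto a atTop (𝓝 0) := by
  have hsq := (summable_of_sum_le (fun m => sq_nonneg (a m)) h).tendsto_atTop_zero.sqrt
  simpa only [Real.sqrt_sq (ha _), Real.sqrt_zero] using hsq

/-- for a bounded operator T on SL^∞ (with bound C), g ∈ H^1 and signs ε,
(Σ_{m=1}^M |⟨T r_m^{(ε)}, g⟩|²)^{1/2} ≤ ‖T‖ ‖g‖_{H^1}; hence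
sup_{‖c‖_∞ ≤ 1} |⟨T r_m^{(c)}, g⟩| → 0 as m → ∞. -/
theorem operator_rademacher_pairing_sq_sum_le
    (T : (Dy → ℝ) →ₗ[ℝ] (Dy → ℝ)) (C : NNReal)
    (hT : ∀ f : Dy → ℝ, slNorm (T f) ≤ (C : ℝ≥0∞) * slNorm f)
    (g : Dy → ℝ) (hg : h1Norm g ≠ ⊤)
    (ε : ℕ → Dy → ℝ) (hε : ∀ m I, |ε m I| = 1) :
    (∀ M : ℕ,
      Real.sqrt (∑ m ∈ Finset.Icc 1 M, (pairing (T (radem (ε m) m)) g) ^ 2)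
        ≤ (C : ℝ) * (h1Norm g).toReal) ∧
    Filter.Tendsto
      (fun m => ⨆ c : {c : Dy → ℝ // ∀ I, |c I| ≤ 1},
        |pairing (T (radem c.val m)) g|)
      Filter.atTop (nhds 0) := by
  refine ⟨fun M => sqrt_sum_sq_pairing_radem_le T C hT hg (fun m I => (hε m I).le) _, ?_⟩
  have : Nonempty {c : Dy → ℝ // ∀ I, |c I| ≤ 1} := ⟨⟨0, by simp⟩⟩
  have hsum := sum_sq_iSup_abs_le (K := ((C : ℝ) * (h1Norm g).toReal) ^ 2)
    (x := fun m (c : {c : Dy → ℝ // ∀ I, |c I| ≤ 1}) => pairing (T (radem c.val m)) g)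
    fun c F => (Real.sqrt_le_left (by positivity)).1 <|
      sqrt_sum_sq_pairing_radem_le T C hT hg (fun m => (c m).property) F
  exact tendsto_zero_of_sum_sq_le (fun m => Real.iSup_nonneg fun _ => abs_nonneg _) hsum
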